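/- arXiv:1902.03279 — 3 statements merged into one kernel-verified Lean document; each statement's English description precedes it below -/
import Mathlib

section
/- Let b ∈ [0,3]. Let u : ℝ → ℝ be continuously differentiable with both u and u' square-integrable on ℝ. Let a₀, b₀ ∈ ℝ with a₀ < b₀, suppose u(x) = 0 for every x ∈ [a₀,b₀], and suppose F(a₀) = F(b₀), where F(x) = -(1/2) ∫_ℝ sgn(x-y) e^{-|x-y|} ((b/2) u(y)² + ((3-b)/2) u'(y)²) dy and sgn denotes the sign function (sgn 0 = 0). Then u(x) = 0 for every x ∈ ℝ. -/
/-!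
With `g = (b/2) u² + ((3-b)/2) u'² ≥ 0` and `k z = sign z · e^{-|z|}`, the hypothesis says
`∫ (k (a₀ - y) - k (b₀ - y)) g y dy = 0`. Outside `[a₀, b₀]` the kernel difference is
positive, since `k` is decreasing on each half-line, and inside `[a₀, b₀]` the density `g`
vanishes because `u` and `u'` do. Hence `g ≡ 0`, which forces `u ≡ 0` when `b > 0`, and
`u' ≡ 0`, so `u ≡ u(a₀) = 0`, when `b = 0`.
-/

open MeasureTheory Real

/-- `-(1/2) signExpKernel` is the derivative of `(1/2) e^{-|z|}`, the convolution kernel of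
`(1 - ∂ₓ²)⁻¹`. -/
noncomputable def signExpKernel (z : ℝ) : ℝ := Real.sign z * Real.exp (-|z|)

noncomputable def rodDensity (b : ℝ) (u : ℝ → ℝ) (y : ℝ) : ℝ :=
  (b / 2) * u y ^ 2 + ((3 - b) / 2) * deriv u y ^ 2

lemma measurable_realSign : Measurable Real.sign :=
  Measurable.ite (measurableSet_lt measurable_id measurable_const) measurable_const
    (Measurable.ite (measurableSet_lt measurable_const measurable_id) measurable_const
      measurable_const)

lemma measurable_signExpKernel : Measurable signExpKernel :=
  measurable_realSign.mul measurable_id.abs.neg.exp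

lemma abs_signExpKernel_le_one (z : ℝ) : |signExpKernel z| ≤ 1 := by
  rw [signExpKernel, abs_mul, abs_of_pos (exp_pos _)]
  have hsign : |Real.sign z| ≤ 1 := by
    rcases Real.sign_apply_eq z with h | h | h <;> simp [h]
  exact mul_le_one₀ hsign (exp_pos _).le (exp_le_one_iff.mpr (neg_nonpos.mpr (abs_nonneg z)))

lemma signExpKernel_of_pos {z : ℝ} (hz : 0 < z) : signExpKernel z = exp (-z) := by
  rw [signExpKernel, Real.sign_of_pos hz, abs_of_pos hz, one_mul]

lemma signExpKernel_of_neg {z : ℝ} (hz : z < 0) : signExpKernel z = -exp z := by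
  rw [signExpKernel, Real.sign_of_neg hz, abs_of_neg hz, neg_neg, neg_one_mul]

lemma signExpKernel_sub_lt_signExpKernel_sub {a b y : ℝ} (hab : a < b)
    (hy : y ∉ Set.Icc a b) : signExpKernel (b - y) < signExpKernel (a - y) := by
  rcases not_and_or.mp hy with hya | hyb
  · rw [signExpKernel_of_pos (by linarith), signExpKernel_of_pos (by linarith)]
    exact exp_lt_exp.mpr (by linarith)
  · rw [signExpKernel_of_neg (by linarith), signExpKernel_of_neg (by linarith), neg_lt_neg_iff]
    exact exp_lt_exp.mpr (by linarith)

lemma integrable_signExpKernel_sub_mul {g : ℝ → ℝ} (hg : Integrable g) (x : ℝ) :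
    Integrable (fun y => signExpKernel (x - y) * g y) :=
  hg.bdd_mul (c := 1)
    (measurable_signExpKernel.comp (measurable_const.sub measurable_id)).aestronglyMeasurable
    (Filter.Eventually.of_forall fun y => abs_signExpKernel_le_one (x - y))

lemma ae_eq_zero_of_integral_mul_eq_zero {α : Type*} [MeasurableSpace α] {μ : Measure α}
    {φ g : α → ℝ} (hg : 0 ≤ g) (hφg : ∀ y, g y = 0 ∨ 0 < φ y)
    (hint : Integrable (fun y => φ y * g y) μ) (h0 : ∫ y, φ y * g y ∂μ = 0) :
    g =ᵐ[μ] 0 := by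
  have hnonneg : 0 ≤ fun y => φ y * g y := fun y => by
    rcases hφg y with h | h
    · simp [h]
    · exact mul_nonneg h.le (hg y)
  filter_upwards [(integral_eq_zero_iff_of_nonneg hnonneg hint).mp h0] with y hy
  rcases hφg y with h | h
  · exact h
  · exact (mul_eq_zero.mp hy).resolve_left h.ne'

lemma deriv_eqOn_zero_of_eqOn_Icc {E : Type*} [NormedAddCommGroup E] [NormedSpace ℝ E]
    {u : ℝ → E} (hu' : Continuous (deriv u)) {a b : ℝ} (hab : a < b)
    (hu : Set.EqOn u 0 (Set.Icc a b)) : Set.EqOn (deriv u) 0 (Set.Icc a b) := by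
  have hIoo : Set.EqOn (deriv u) 0 (Set.Ioo a b) := fun y hy => by
    have hloc : u =ᶠ[nhds y] fun _ => 0 :=
      Filter.eventually_of_mem (Ioo_mem_nhds hy.1 hy.2)
        fun z hz => hu (Set.Ioo_subset_Icc_self hz)
    simp [hloc.deriv_eq]
  simpa [closure_Ioo hab.ne] using hIoo.closure hu' continuous_const

lemma rodDensity_nonneg {b : ℝ} (hb : b ∈ Set.Icc (0 : ℝ) 3) (u : ℝ → ℝ) :
    0 ≤ rodDensity b u := fun y =>
  add_nonneg (mul_nonneg (by linarith [hb.1]) (sq_nonneg _))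
    (mul_nonneg (by linarith [hb.2]) (sq_nonneg _))

lemma continuous_rodDensity (b : ℝ) {u : ℝ → ℝ} (hu : ContDiff ℝ 1 u) :
    Continuous (rodDensity b u) :=
  (continuous_const.mul (hu.continuous.pow 2)).add
    (continuous_const.mul ((hu.continuous_deriv le_rfl).pow 2))

lemma integrable_rodDensity (b : ℝ) {u : ℝ → ℝ} (hu : MemLp u 2) (hu' : MemLp (deriv u) 2) :
    Integrable (rodDensity b u) :=
  (hu.integrable_sq.const_mul _).add (hu'.integrable_sq.const_mul _)

lemma rodDensity_eqOn_zero_of_eqOn_Icc (b : ℝ) {u : ℝ → ℝ} (hu' : Continuous (deriv u))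
    {s t : ℝ} (hst : s < t) (hu : Set.EqOn u 0 (Set.Icc s t)) :
    Set.EqOn (rodDensity b u) 0 (Set.Icc s t) := fun y hy => by
  simp [rodDensity, hu hy, deriv_eqOn_zero_of_eqOn_Icc hu' hst hu hy]

lemma eq_zero_of_rodDensity_eq_zero {b : ℝ} (hb : b ∈ Set.Icc (0 : ℝ) 3) {u : ℝ → ℝ}
    (hu : Differentiable ℝ u) {a : ℝ} (ha : u a = 0) (h : rodDensity b u = 0) (x : ℝ) :
    u x = 0 := by
  have hx := congrFun h
  simp only [rodDensity, Pi.zero_apply] at hx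
  rcases hb.1.eq_or_lt with rfl | hb0
  · have hderiv : ∀ y, deriv u y = 0 := fun y => by nlinarith [hx y]
    rw [is_const_of_deriv_eq_zero hu hderiv x a, ha]
  · have hbu : b * u x ^ 2 = 0 := by
      nlinarith [hx x, mul_nonneg hb0.le (sq_nonneg (u x)),
        mul_nonneg (sub_nonneg.mpr hb.2) (sq_nonneg (deriv u x))]
    simpa [hb0.ne'] using hbu

theorem b_equation_unique_continuation_time_slice
    (b : ℝ) (hb : b ∈ Set.Icc (0 : ℝ) 3)
    (u : ℝ → ℝ) (hu : ContDiff ℝ 1 u)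
    (huL2 : MemLp u 2 (volume : Measure ℝ))
    (hu'L2 : MemLp (deriv u) 2 (volume : Measure ℝ))
    (a₀ b₀ : ℝ) (hab : a₀ < b₀)
    (hu_zero : ∀ x ∈ Set.Icc a₀ b₀, u x = 0)
    (F : ℝ → ℝ)
    (hF : ∀ x, F x = -(1/2) * ∫ y : ℝ,
        Real.sign (x - y) * Real.exp (-|x - y|) *
          ((b/2) * u y ^ 2 + ((3 - b)/2) * deriv u y ^ 2))
    (hFab : F a₀ = F b₀) :
    ∀ x : ℝ, u x = 0 := by
  have hg := integrable_signExpKernel_sub_mul (integrable_rodDensity b huL2 hu'L2)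
  have hconv : ∫ y, signExpKernel (a₀ - y) * rodDensity b u y
      = ∫ y, signExpKernel (b₀ - y) * rodDensity b u y :=
    mul_left_cancel₀ (by norm_num) ((hF a₀).symm.trans (hFab.trans (hF b₀)))
  have hdiff :
      ∫ y, (signExpKernel (a₀ - y) - signExpKernel (b₀ - y)) * rodDensity b u y = 0 := by
    simp only [sub_mul]
    rw [integral_sub (hg a₀) (hg b₀), hconv, sub_self]
  have hweight (y : ℝ) :
      rodDensity b u y = 0 ∨ 0 < signExpKernel (a₀ - y) - signExpKernel (b₀ - y) := by
    by_cases hy : y ∈ Set.Icc a₀ b₀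
    · exact .inl (rodDensity_eqOn_zero_of_eqOn_Icc b (hu.continuous_deriv le_rfl) hab hu_zero hy)
    · exact .inr (sub_pos.mpr (signExpKernel_sub_lt_signExpKernel_sub hab hy))
  have hae := ae_eq_zero_of_integral_mul_eq_zero (rodDensity_nonneg hb u) hweight
    (by simpa only [sub_mul, Pi.sub_def] using (hg a₀).sub (hg b₀)) hdiff
  have hg_zero := (continuous_rodDensity b hu).ae_eq_iff_eq volume continuous_const |>.mp hae
  exact eq_zero_of_rodDensity_eq_zero hb (hu.differentiable one_ne_zero)
    (hu_zero a₀ ⟨le_rfl, hab.le⟩) hg_zero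
end

section
/- Define g : ℝ → ℝ by g(x) = sinh(fract(x) - 1/2) / (2 sinh(1/2)), where fract(x) = x - ⌊x⌋ is the fractional part. Let u : ℝ → ℝ be continuously differentiable and 1-periodic. Let a, b ∈ ℝ with 0 < a < b < 1, suppose u(x) = 0 for every x ∈ [a,b], and suppose F(a) = F(b), where F(x) = ∫_0^1 g(x-y) (u(y)² + (1/2) u'(y)²) dy. Then u(x) = 0 for every x ∈ ℝ. -/
/-!
Subtracting the two representations, `F b - F a = ∫₀¹ (g (b - y) - g (a - y)) f y dy` with
`f = u² + (u')²/2 ≥ 0`. For `y ∈ [0, 1]` outside `[a, b]` the points `a - y` and `b - y` lie in the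
same unit cell, where `g` is `sinh` up to a shift and a factor, and `sinh t - t` is increasing;
hence the kernel is at least `(b - a) / (2 sinh (1/2)) > 0` there. Since `f` vanishes on `[a, b]`,
the integrand dominates a positive multiple of `f` on all of `[0, 1]`, so `F a = F b` forces the
continuous function `f`, and with it `u`, to vanish on `[0, 1]`.
-/

open MeasureTheory Real Set intervalIntegral

noncomputable def periodicGreenDeriv (x : ℝ) : ℝ :=
  Real.sinh (Int.fract x - 1/2) / (2 * Real.sinh (1/2))

lemma abs_periodicGreenDeriv_le (x : ℝ) : |periodicGreenDeriv x| ≤ 1/2 := by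
  have hs : 0 < 2 * sinh (1/2) := by positivity
  have hfract : |Int.fract x - 1/2| ≤ 1/2 := by
    rw [abs_le]
    constructor <;> linarith [Int.fract_nonneg x, Int.fract_lt_one x]
  rw [periodicGreenDeriv, abs_div, abs_sinh, abs_of_pos hs, div_le_iff₀ hs]
  linarith [sinh_le_sinh.mpr hfract]

lemma measurable_periodicGreenDeriv : Measurable periodicGreenDeriv :=
  (continuous_sinh.measurable.comp (measurable_fract.sub_const _)).div_const _

lemma intervalIntegrable_periodicGreenDeriv_sub_mul {f : ℝ → ℝ} {s t : ℝ} (x : ℝ)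
    (hf : ContinuousOn f (uIcc s t)) :
    IntervalIntegrable (fun y => periodicGreenDeriv (x - y) * f y) volume s t := by
  refine IntervalIntegrable.mul_continuousOn ?_ hf
  rw [intervalIntegrable_iff]
  refine Measure.integrableOn_of_bounded (M := 1/2) measure_Ioc_lt_top.ne ?_
    (ae_of_all _ fun y => abs_periodicGreenDeriv_le (x - y))
  exact (measurable_periodicGreenDeriv.comp (measurable_const.sub measurable_id)).aestronglyMeasurable

lemma div_le_periodicGreenDeriv_sub_of_floor_eq {x y : ℝ} (hxy : x ≤ y) (hfloor : ⌊x⌋ = ⌊y⌋) :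
    (y - x) / (2 * sinh (1/2)) ≤ periodicGreenDeriv y - periodicGreenDeriv x := by
  have hfract : Int.fract y - Int.fract x = y - x := by
    rw [Int.fract, Int.fract, hfloor]
    ring
  have hmono := sinh_sub_id_strictMono.monotone
    (show Int.fract x - 1/2 ≤ Int.fract y - 1/2 by linarith)
  rw [periodicGreenDeriv, periodicGreenDeriv, div_sub_div_same]
  exact div_le_div_of_nonneg_right (by linarith) (by positivity)

lemma floor_sub_eq_floor_sub_of_notMem_Icc {a b y : ℝ} (ha : 0 ≤ a) (hab : a ≤ b) (hb : b < 1)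
    (hy : y ∈ Icc 0 1) (hyab : y ∉ Icc a b) : ⌊a - y⌋ = ⌊b - y⌋ := by
  obtain ⟨hy0, hy1⟩ := hy
  rcases lt_or_ge y a with hya | hay
  · rw [Int.floor_eq_zero_iff.mpr ⟨by linarith, by linarith⟩,
      Int.floor_eq_zero_iff.mpr ⟨by linarith, by linarith⟩]
  · have hby : b < y := by by_contra! h; exact hyab ⟨hay, h⟩
    rw [(Int.floor_eq_iff (z := -1)).mpr ⟨by push_cast; linarith, by push_cast; linarith⟩,
      (Int.floor_eq_iff (z := -1)).mpr ⟨by push_cast; linarith, by push_cast; linarith⟩]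

theorem eqOn_zero_of_integral_periodicGreenDeriv_sub_mul_eq {f : ℝ → ℝ} {a b : ℝ}
    (ha : 0 ≤ a) (hab : a < b) (hb : b < 1) (hf : ContinuousOn f (Icc 0 1))
    (hf_nonneg : ∀ y ∈ Icc (0:ℝ) 1, 0 ≤ f y) (hf_zero : EqOn f 0 (Icc a b))
    (heq : ∫ y in (0:ℝ)..1, periodicGreenDeriv (a - y) * f y =
      ∫ y in (0:ℝ)..1, periodicGreenDeriv (b - y) * f y) :
    EqOn f 0 (Icc 0 1) := by
  set c := (b - a) / (2 * sinh (1/2))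
  have hc : 0 < c := div_pos (sub_pos.mpr hab) (by positivity)
  have hf' : ContinuousOn f (uIcc 0 1) := by rwa [uIcc_of_le zero_le_one]
  have hint := fun x => intervalIntegrable_periodicGreenDeriv_sub_mul x hf'
  have hkernel : ∀ y ∈ Icc (0:ℝ) 1,
      c * f y ≤ (periodicGreenDeriv (b - y) - periodicGreenDeriv (a - y)) * f y := by
    intro y hy
    by_cases hyab : y ∈ Icc a b
    · simp [hf_zero hyab]
    refine mul_le_mul_of_nonneg_right ?_ (hf_nonneg y hy)
    have := div_le_periodicGreenDeriv_sub_of_floor_eq (by linarith : a - y ≤ b - y)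
      (floor_sub_eq_floor_sub_of_notMem_Icc ha hab.le hb hy hyab)
    rwa [sub_sub_sub_cancel_right] at this
  have hdiff : ∫ y in (0:ℝ)..1,
      (periodicGreenDeriv (b - y) - periodicGreenDeriv (a - y)) * f y = 0 := by
    simp_rw [sub_mul]
    rw [integral_sub (hint b) (hint a), heq, sub_self]
  intro y hy
  by_contra hne
  have hpos : 0 < ∫ y in (0:ℝ)..1, c * f y :=
    integral_pos zero_lt_one (continuousOn_const.mul hf)
      (fun x hx => mul_nonneg hc.le (hf_nonneg x (Ioc_subset_Icc_self hx)))
      ⟨y, hy, mul_pos hc ((hf_nonneg y hy).lt_of_ne' hne)⟩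
  have hmono : ∫ y in (0:ℝ)..1, c * f y ≤
      ∫ y in (0:ℝ)..1, (periodicGreenDeriv (b - y) - periodicGreenDeriv (a - y)) * f y := by
    refine integral_mono_on zero_le_one
      ((continuousOn_const.mul hf).intervalIntegrable_of_Icc zero_le_one) ?_ hkernel
    simpa only [sub_mul] using (hint b).sub (hint a)
  linarith

theorem eqOn_deriv_zero_of_eqOn_zero {u : ℝ → ℝ} {a b : ℝ} (hab : a < b)
    (hu' : ContinuousOn (deriv u) (Icc a b)) (hu : EqOn u 0 (Icc a b)) :
    EqOn (deriv u) 0 (Icc a b) := by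
  have hIoo : EqOn (deriv u) 0 (Ioo a b) := by
    simpa using (hu.mono Ioo_subset_Icc_self).deriv isOpen_Ioo
  exact hIoo.of_subset_closure hu' continuousOn_const Ioo_subset_Icc_self
    (closure_Ioo hab.ne).ge

theorem periodic_CH_unique_continuation_time_slice
    (g : ℝ → ℝ)
    (hg : ∀ x, g x = Real.sinh (Int.fract x - 1/2) / (2 * Real.sinh (1/2)))
    (u : ℝ → ℝ) (hu : ContDiff ℝ 1 u) (hper : Function.Periodic u 1)
    (a b : ℝ) (ha : 0 < a) (hab : a < b) (hb : b < 1)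
    (hu_zero : ∀ x ∈ Set.Icc a b, u x = 0)
    (F : ℝ → ℝ)
    (hF : ∀ x, F x = ∫ y in (0:ℝ)..1, g (x - y) * (u y ^ 2 + (1/2) * deriv u y ^ 2))
    (hFab : F a = F b) :
    ∀ x : ℝ, u x = 0 := by
  obtain rfl : g = periodicGreenDeriv := funext hg
  have hu_cont := hu.continuous
  have hu'_cont := hu.continuous_deriv le_rfl
  have hu'_zero := eqOn_deriv_zero_of_eqOn_zero hab hu'_cont.continuousOn hu_zero
  have hf_zero : EqOn (fun y => u y ^ 2 + (1/2) * deriv u y ^ 2) 0 (Icc 0 1) :=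
    eqOn_zero_of_integral_periodicGreenDeriv_sub_mul_eq ha.le hab hb (by fun_prop)
      (fun y _ => by positivity) (fun y hy => by simp [hu_zero y hy, hu'_zero hy])
      (by rwa [← hF, ← hF])
  intro x
  have hfract : Int.fract x ∈ Icc (0:ℝ) 1 := ⟨Int.fract_nonneg x, (Int.fract_lt_one x).le⟩
  have hf_fract : u (Int.fract x) ^ 2 + 1/2 * deriv u (Int.fract x) ^ 2 = 0 := hf_zero hfract
  rw [← hper.sub_int_mul_eq ⌊x⌋, mul_one, Int.self_sub_floor]
  nlinarith [sq_nonneg (u (Int.fract x)), sq_nonneg (deriv u (Int.fract x))]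
end

section
/- Let c ∈ ℝ and define u : ℝ × ℝ → ℝ by u(x,t) = c e^{-|x-ct|}, and p : ℝ × ℝ → ℝ by p(x,t) = (3c²/4) ∫_ℝ e^{-|x-y|} e^{-2|y-ct|} dy. Then for every (x,t) with x ≠ ct: the partial derivative of u with respect to t at (x,t) equals c² sgn(x-ct) e^{-|x-ct|}; the partial derivative of u with respect to x at (x,t) equals -c sgn(x-ct) e^{-|x-ct|}; p is differentiable in x at (x,t); and ∂_t u(x,t) + u(x,t) ∂_x u(x,t) + ∂_x p(x,t) = 0. -/
/-!
Off the crest the peakon is smooth, with `∂ₓ e^{-|ξ|} = -sgn ξ · e^{-|ξ|}`. The nonlocal term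
has a closed form: splitting the convolution integral at `0` and at `ξ = x - ct` gives
`p = c² e^{-|ξ|} - (c²/2) e^{-2|ξ|}`, so `∂ₓ p = c² ∂ₓ e^{-|ξ|} (1 - e^{-|ξ|})`, which is exactly
`-(∂ₜ u + u ∂ₓ u)`.
-/

open MeasureTheory Real Set


theorem hasDerivAt_exp_neg_abs {s : ℝ} (hs : s ≠ 0) :
    HasDerivAt (fun y : ℝ => exp (-|y|)) (-Real.sign s * exp (-|s|)) s := by
  rcases hs.lt_or_gt with hs | hs
  · simpa [Real.sign_of_neg hs] using (hasDerivAt_abs_neg hs).neg.exp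
  · simpa [Real.sign_of_pos hs] using (hasDerivAt_abs_pos hs).neg.exp

theorem integrable_exp_neg_mul_abs {a : ℝ} (ha : 0 < a) :
    Integrable (fun y : ℝ => exp (-a * |y|)) := by
  rw [← integrableOn_univ, ← Iic_union_Ioi (a := (0 : ℝ)), integrableOn_union]
  constructor
  · refine (integrableOn_exp_mul_Iic ha 0).congr_fun (fun y hy => ?_) measurableSet_Iic
    rw [abs_of_nonpos hy, neg_mul_neg]
  · refine (integrableOn_exp_mul_Ioi (neg_lt_zero.2 ha) 0).congr_fun (fun y hy => ?_)
      measurableSet_Ioi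
    rw [abs_of_pos hy]

theorem integrable_exp_neg_abs_sub_mul_exp_neg_two_mul_abs (s : ℝ) :
    Integrable (fun y : ℝ => exp (-|s - y|) * exp (-2 * |y|)) := by
  refine (integrable_exp_neg_mul_abs two_pos).mono' (by fun_prop) (ae_of_all _ fun y => ?_)
  rw [norm_of_nonneg (by positivity)]
  exact mul_le_of_le_one_left (exp_pos _).le (exp_le_one_iff.2 (neg_nonpos.2 (abs_nonneg _)))

theorem integral_exp_neg_abs_sub_mul_exp_neg_two_mul_abs_of_nonneg {s : ℝ} (hs : 0 ≤ s) :
    ∫ y, exp (-|s - y|) * exp (-2 * |y|) = 4 / 3 * exp (-s) - 2 / 3 * exp (-s) ^ 2 := by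
  have hf := integrable_exp_neg_abs_sub_mul_exp_neg_two_mul_abs s
  have left : ∫ y in Iic 0, exp (-|s - y|) * exp (-2 * |y|) = exp (-s) / 3 := by
    rw [setIntegral_congr_fun measurableSet_Iic (g := fun y => exp (-s) * exp (3 * y)),
      integral_const_mul, integral_exp_mul_Iic three_pos, mul_zero, exp_zero, mul_one_div]
    intro y (hy : y ≤ 0)
    dsimp only
    rw [abs_of_nonpos hy, abs_of_nonneg (by linarith), ← exp_add, ← exp_add]
    ring_nf
  have middle : ∫ y in Ioc 0 s, exp (-|s - y|) * exp (-2 * |y|) = exp (-s) * (1 - exp (-s)) := by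
    rw [setIntegral_congr_fun measurableSet_Ioc (g := fun y => exp (-s) * exp (-y)),
      integral_const_mul, ← intervalIntegral.integral_of_le hs,
      intervalIntegral.integral_comp_neg (fun y => exp y), integral_exp, neg_zero, exp_zero]
    rintro y ⟨hy₀, hys⟩
    dsimp only
    rw [abs_of_pos hy₀, abs_of_nonneg (by linarith), ← exp_add, ← exp_add]
    ring_nf
  have right : ∫ y in Ioi s, exp (-|s - y|) * exp (-2 * |y|) = exp (-s) ^ 2 / 3 := by
    rw [setIntegral_congr_fun measurableSet_Ioi (g := fun y => exp s * exp (-3 * y)),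
      integral_const_mul, integral_exp_mul_Ioi (by norm_num), ← exp_nat_mul, neg_div_neg_eq,
      mul_div_assoc', ← exp_add]
    · ring_nf
    · intro y (hy : s < y)
      dsimp only
      rw [abs_of_neg (sub_neg.2 hy), abs_of_pos (hs.trans_lt hy), ← exp_add, ← exp_add]
      ring_nf
  rw [← intervalIntegral.integral_Iic_add_Ioi hf.integrableOn hf.integrableOn,
    ← Ioc_union_Ioi_eq_Ioi hs, setIntegral_union (Ioc_disjoint_Ioi le_rfl) measurableSet_Ioi
      hf.integrableOn hf.integrableOn, left, middle, right]
  ring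

theorem integral_exp_neg_abs_sub_mul_exp_neg_two_mul_abs_sub (x a : ℝ) :
    ∫ y, exp (-|x - y|) * exp (-2 * |y - a|)
      = 4 / 3 * exp (-|x - a|) - 2 / 3 * exp (-|x - a|) ^ 2 := by
  rw [← integral_add_right_eq_self _ a]
  simp only [add_sub_cancel_right, sub_add_eq_sub_sub_swap]
  rcases le_total 0 (x - a) with hs | hs
  · rw [abs_of_nonneg hs, integral_exp_neg_abs_sub_mul_exp_neg_two_mul_abs_of_nonneg hs]
  · rw [abs_of_nonpos hs, ← integral_exp_neg_abs_sub_mul_exp_neg_two_mul_abs_of_nonneg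
      (neg_nonneg.2 hs), ← integral_neg_eq_self]
    simp only [abs_neg, sub_neg_eq_add, neg_sub_left, add_comm]

theorem peakon_solves_CH_off_crest
    (c : ℝ)
    (u : ℝ × ℝ → ℝ) (hu : ∀ x t, u (x, t) = c * Real.exp (-|x - c * t|))
    (p : ℝ × ℝ → ℝ)
    (hp : ∀ x t, p (x, t) =
      (3 * c ^ 2 / 4) * ∫ y : ℝ, Real.exp (-|x - y|) * Real.exp (-2 * |y - c * t|)) :
    ∀ x t : ℝ, x ≠ c * t →
      HasDerivAt (fun t' => u (x, t'))
        (c ^ 2 * Real.sign (x - c * t) * Real.exp (-|x - c * t|)) t ∧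
      HasDerivAt (fun x' => u (x', t))
        (-c * Real.sign (x - c * t) * Real.exp (-|x - c * t|)) x ∧
      ∃ px : ℝ, HasDerivAt (fun x' => p (x', t)) px x ∧
        c ^ 2 * Real.sign (x - c * t) * Real.exp (-|x - c * t|) +
          u (x, t) * (-c * Real.sign (x - c * t) * Real.exp (-|x - c * t|)) + px = 0 := by
  intro x t hxt
  have hξ := hasDerivAt_exp_neg_abs (sub_ne_zero.2 hxt)
  have hξx := hξ.comp x ((hasDerivAt_id' x).sub_const (c * t))
  have hξt := hξ.comp t (((hasDerivAt_id' t).const_mul c).const_sub x)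
  have hp_closed : (fun x' => p (x', t)) =
      fun x' => c ^ 2 * exp (-|x' - c * t|) - c ^ 2 / 2 * exp (-|x' - c * t|) ^ 2 := by
    ext x'
    rw [hp, integral_exp_neg_abs_sub_mul_exp_neg_two_mul_abs_sub]
    ring
  simp only [hu, hp_closed]
  refine ⟨(hξt.const_mul c).congr_deriv (by ring), (hξx.const_mul c).congr_deriv (by ring),
    _, (hξx.const_mul _).sub ((hξx.pow 2).const_mul _), ?_⟩
  simp only [Function.comp_apply]
  ring
end
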